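/- Let G be a finite simple graph on n ≥ 2 vertices whose minimum degree δ satisfies δ ≥ 2·log₂(n). Then avd(G) ≤ (n+1)/2. -/

import Mathlib

open Finset

/-- `S` is a dominating set of `G`: every vertex is in `S` or adjacent to a vertex of `S`. -/
def SimpleGraph.IsDomSet {V : Type*} (G : SimpleGraph V) (S : Finset V) : Prop :=
  ∀ v : V, v ∈ S ∨ ∃ u ∈ S, G.Adj u v

/-- The family of all dominating sets of `G`. -/
noncomputable def SimpleGraph.domSets {V : Type*} [Fintype V] (G : SimpleGraph V) :
    Finset (Finset V) :=
  @Finset.filter _ (fun S => G.IsDomSet S) (Classical.decPred _) Finset.univ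

/-- The average order (cardinality) of a dominating set of `G`. -/
noncomputable def SimpleGraph.avd {V : Type*} [Fintype V] (G : SimpleGraph V) : ℝ :=
  (∑ S ∈ G.domSets, (S.card : ℝ)) / (G.domSets).card

/-!
A set fails to dominate exactly when it avoids some closed neighbourhood `N[v]`, which has at least
`δ + 1` vertices, so at most `n · 2^(n-δ-1)` sets are not dominating; `δ ≥ 2 log₂ n` makes this at
most `2ⁿ / (n + 1)`. On the other hand all `2ⁿ` subsets together have total size `n · 2ⁿ / 2`, so
the dominating sets have total size at most `n · 2ⁿ / 2 ≤ (n + 1) · |D(G)| / 2`.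
-/

theorem two_mul_sum_card_finset (α : Type*) [Fintype α] [DecidableEq α] :
    2 * ∑ s : Finset α, #s = Fintype.card α * 2 ^ Fintype.card α := by
  have hcompl : ∑ s : Finset α, #sᶜ = ∑ s : Finset α, #s :=
    Equiv.sum_comp (compl_involutive.toPerm _) card
  calc 2 * ∑ s : Finset α, #s = ∑ s : Finset α, (#s + #sᶜ) := by
        rw [sum_add_distrib, hcompl, two_mul]
    _ = Fintype.card α * 2 ^ Fintype.card α := by
        simp only [card_add_card_compl, sum_const, card_univ, Fintype.card_finset, smul_eq_mul,
          mul_comm]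

theorem sq_le_two_pow_of_two_mul_logb_le {n δ : ℕ} (h : 2 * Real.logb 2 n ≤ δ) :
    n ^ 2 ≤ 2 ^ δ := by
  rcases Nat.eq_zero_or_pos n with rfl | hn
  · simp
  have hlog : Real.logb 2 ((n : ℝ) ^ 2) ≤ δ := by rwa [Real.logb_pow, Nat.cast_ofNat]
  rw [Real.logb_le_iff_le_rpow one_lt_two (by positivity), Real.rpow_natCast] at hlog
  exact_mod_cast hlog

theorem succ_mul_mul_two_pow_sub_le {n δ : ℕ} (hδ : δ < n) (hn : n ^ 2 ≤ 2 ^ δ) :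
    (n + 1) * (n * 2 ^ (n - δ - 1)) ≤ 2 ^ n :=
  calc (n + 1) * (n * 2 ^ (n - δ - 1)) ≤ 2 * n ^ 2 * 2 ^ (n - δ - 1) := by
        rw [← mul_assoc]; exact Nat.mul_le_mul_right _ (by nlinarith)
    _ ≤ 2 * 2 ^ δ * 2 ^ (n - δ - 1) := by gcongr
    _ = 2 ^ n := by rw [← pow_succ', ← pow_add]; congr 1; omega

namespace SimpleGraph

variable {V : Type*} [Fintype V] (G : SimpleGraph V)

theorem mem_domSets {S : Finset V} : S ∈ G.domSets ↔ G.IsDomSet S := by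
  simp [domSets]

theorem univ_mem_domSets : univ ∈ G.domSets :=
  G.mem_domSets.2 fun v => Or.inl (mem_univ v)

theorem avd_le_of_card_mul_two_pow_le
    (h : Fintype.card V * 2 ^ Fintype.card V ≤ (Fintype.card V + 1) * #G.domSets) :
    G.avd ≤ (Fintype.card V + 1) / 2 := by
  classical
  have hpos : (0 : ℝ) < #G.domSets := by exact_mod_cast card_pos.2 ⟨_, G.univ_mem_domSets⟩
  have hsum : 2 * ∑ S ∈ G.domSets, #S ≤ (Fintype.card V + 1) * #G.domSets :=
    calc 2 * ∑ S ∈ G.domSets, #S ≤ 2 * ∑ S : Finset V, #S := by gcongr; exact subset_univ _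
      _ = _ := two_mul_sum_card_finset V
      _ ≤ _ := h
  rw [avd, div_le_div_iff₀ hpos two_pos, mul_comm]
  exact_mod_cast hsum

theorem not_isDomSet_iff [DecidableEq V] [DecidableRel G.Adj] {S : Finset V} :
    ¬ G.IsDomSet S ↔ ∃ v, S ⊆ (insert v (G.neighborFinset v))ᶜ := by
  simp only [IsDomSet, not_forall, not_or, not_exists, not_and, subset_iff, mem_compl, mem_insert,
    mem_neighborFinset]
  exact ⟨fun ⟨v, hv, hadj⟩ =>
      ⟨v, fun u hu => ⟨ne_of_mem_of_not_mem hu hv, hadj u hu ∘ G.adj_symm⟩⟩,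
    fun ⟨v, hv⟩ => ⟨v, fun h => (hv h).1 rfl, fun u hu => (hv hu).2 ∘ G.adj_symm⟩⟩

theorem card_compl_domSets_le [DecidableEq V] [DecidableRel G.Adj] :
    #G.domSetsᶜ ≤ Fintype.card V * 2 ^ (Fintype.card V - G.minDegree - 1) := by
  have hsub : G.domSetsᶜ ⊆ univ.biUnion fun v => (insert v (G.neighborFinset v))ᶜ.powerset := by
    intro S hS
    obtain ⟨v, hv⟩ := G.not_isDomSet_iff.1 (by simpa [mem_domSets] using hS)
    exact mem_biUnion.2 ⟨v, mem_univ v, mem_powerset.2 hv⟩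
  refine (card_le_card hsub).trans <|
    (card_biUnion_le_card_mul _ _ _ fun v _ => ?_).trans_eq (by rw [card_univ])
  rw [card_powerset, card_compl, card_insert_of_notMem (G.notMem_neighborFinset_self v),
    card_neighborFinset_eq_degree]
  have := G.minDegree_le_degree v
  exact Nat.pow_le_pow_right two_pos (by omega)

end SimpleGraph

/-- For a graph `G` on `n ≥ 2` vertices with minimum degree `δ ≥ 2·log₂(n)`,
`avd(G) ≤ (n+1)/2`. -/
theorem avd_le_of_minDegree_log {V : Type*} [Fintype V] (G : SimpleGraph V)
    [DecidableRel G.Adj] (n : ℕ) (hn : n = Fintype.card V) (h2 : 2 ≤ n)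
    (hδ : 2 * Real.logb 2 (n : ℝ) ≤ (G.minDegree : ℝ)) :
    G.avd ≤ ((n : ℝ) + 1) / 2 := by
  classical
  subst hn
  have : Nonempty V := Fintype.card_pos_iff.1 (by omega)
  have hnonDom := G.card_compl_domSets_le
  have hcount := succ_mul_mul_two_pow_sub_le G.minDegree_lt_card
    (sq_le_two_pow_of_two_mul_logb_le hδ)
  have htotal : #G.domSets + #G.domSetsᶜ = 2 ^ Fintype.card V := by
    rw [card_add_card_compl, Fintype.card_finset]
  refine G.avd_le_of_card_mul_two_pow_le ?_
  nlinarith
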